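/- For every positive integer k, every complex number α with α + k ≠ 0, α ≠ 0, and |k/(α+k)| < 1, the following three-term identity holds at x = k/(α+k): ∑_{n=0}^{k-1} [(α)_n (1-k)_n / ((-k)_n n!)] x^n = [(α)_{k+1} / (k · (k+1)!)] · x^{k+1} · ₂F₁(α+k+1, 2; k+2; x), where ₂F₁(α+k+1, 2; k+2; x) = ∑_{n=0}^∞ (α+k+1)_n (2)_n / ((k+2)_n n!) x^n. -/

import Mathlib

/-!
Put `x = k/(α+k)` and let `t n = (α)_n xⁿ / n!` be the terms of `(1-x)^(-α)`.
Since `(1-k)_n / (-k)_n = (k-n)/k`, the left-hand side is `k⁻¹ ∑_{n<k} t n (k-n)`.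
The whole series `∑ t n (k-n)` vanishes: from `(n+1) t (n+1) = x (α+n) t n` and `x α = k (1-x)`
one gets `(1-x) t n (k-n) = G (n+1) - G n` with `G n = n t n`, and `G` is summable because
`G (n+1)` is a multiple of the terms of `(1-x)^(-α-1)`. The term `n = k` is zero, so the finite
sum is minus the tail `n ≥ k+1`, and after reindexing `n = m+k+1` the tail matches the
`₂F₁` series termwise because `(2)_m = (m+1)!` and `(k+1)! (k+2)_m = (k+1+m)!`.
-/

open Polynomial
open scoped Nat

theorem mul_ascPochhammer_eval_add_one {R : Type*} [CommSemiring R] (a : R) (n : ℕ) :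
    a * (ascPochhammer R n).eval (a + 1) = (ascPochhammer R n).eval a * (a + n) := by
  rw [← ascPochhammer_succ_eval, ascPochhammer_succ_left, eval_mul, eval_X, eval_comp, eval_add,
    eval_X, eval_one]

theorem ascPochhammer_eval_add {R : Type*} [CommSemiring R] (a : R) (n m : ℕ) :
    (ascPochhammer R (n + m)).eval a =
      (ascPochhammer R n).eval a * (ascPochhammer R m).eval (a + n) := by
  rw [← ascPochhammer_mul, eval_mul, eval_comp, eval_add, eval_X, eval_natCast]

theorem ascPochhammer_eval_one_sub_div_eval_neg {K : Type*} [Field K] [CharZero K] {k n : ℕ}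
    (hn : n < k) :
    (ascPochhammer K n).eval (1 - k : K) / (ascPochhammer K n).eval (-k : K) = (k - n) / k := by
  have hk : (k : K) ≠ 0 := by exact_mod_cast (n.zero_le.trans_lt hn).ne'
  have hpoch : (ascPochhammer K n).eval (-k : K) ≠ 0 := by
    rw [Ne, ascPochhammer_eval_eq_zero_iff]
    rintro ⟨j, hj, hjk⟩
    have : j = k := by simpa using hjk
    omega
  have key := mul_ascPochhammer_eval_add_one (-k : K) n
  rw [neg_add_eq_sub] at key
  rw [div_eq_div_iff hpoch hk]
  linear_combination -key

theorem Ring.choose_add_sub_one_eq_ascPochhammer_eval_div {K : Type*} [Field K] [CharZero K]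
    (a : K) (n : ℕ) : Ring.choose (a + n - 1) n = (ascPochhammer K n).eval a / n ! := by
  rw [Ring.choose_eq_smul, descPochhammer_smeval_eq_ascPochhammer, ascPochhammer_smeval_cast,
    ascPochhammer_smeval_eq_eval, smul_eq_mul]
  ring_nf

noncomputable def hyper1F0Term (a x : ℂ) (n : ℕ) : ℂ := (ascPochhammer ℂ n).eval a / n ! * x ^ n

namespace hyper1F0Term

variable (a x : ℂ)

theorem succ_mul_succ (n : ℕ) :
    (n + 1) * hyper1F0Term a x (n + 1) = x * (a + n) * hyper1F0Term a x n := by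
  simp only [hyper1F0Term, ascPochhammer_succ_eval, Nat.factorial_succ, Nat.cast_mul, pow_succ]
  field_simp
  push_cast
  ring

theorem succ_mul_succ_eq_param_add_one (n : ℕ) :
    (n + 1) * hyper1F0Term a x (n + 1) = a * x * hyper1F0Term (a + 1) x n := by
  simp only [hyper1F0Term, ascPochhammer_succ_left, eval_mul, eval_X, eval_comp, eval_add, eval_one,
    Nat.factorial_succ, Nat.cast_mul, pow_succ]
  field_simp
  push_cast
  ring

theorem add_succ_mul_succ (k m : ℕ) :
    hyper1F0Term a x (m + (k + 1)) * (m + 1) =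
      (ascPochhammer ℂ (k + 1)).eval a / (k + 1)! * x ^ (k + 1) *
        ((ascPochhammer ℂ m).eval (a + k + 1) * (ascPochhammer ℂ m).eval 2 /
          ((ascPochhammer ℂ m).eval (k + 2 : ℂ) * m !) * x ^ m) := by
  have htwo : (ascPochhammer ℂ m).eval 2 = (m + 1)! := by
    simpa [add_comm 1 m, one_add_one_eq_two] using factorial_mul_ascPochhammer ℂ 1 m
  have hshift : ((k + 1)! : ℂ) * (ascPochhammer ℂ m).eval (k + 2 : ℂ) = (k + 1 + m)! := by
    simpa [add_assoc, one_add_one_eq_two] using factorial_mul_ascPochhammer ℂ (k + 1) m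
  have hpoch : (ascPochhammer ℂ m).eval (k + 2 : ℂ) ≠ 0 := by
    intro h
    rw [h, mul_zero] at hshift
    exact Nat.cast_ne_zero.mpr (Nat.factorial_ne_zero _) hshift.symm
  have hm : (m ! : ℂ) ≠ 0 := Nat.cast_ne_zero.mpr m.factorial_ne_zero
  have hk : ((k + 1)! : ℂ) ≠ 0 := Nat.cast_ne_zero.mpr (k + 1).factorial_ne_zero
  rw [hyper1F0Term, add_comm m, ascPochhammer_eval_add, Nat.cast_succ k, ← add_assoc, pow_add,
    htwo, Nat.factorial_succ m, ← hshift]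
  push_cast
  field_simp

variable {x}

theorem summable (hx : ‖x‖ < 1) : Summable (hyper1F0Term a x) := by
  have hx' : x ∈ Metric.eball 0 1 := by
    rw [Metric.mem_eball, edist_zero_right, ← ofReal_norm]
    exact ENNReal.ofReal_lt_one.mpr hx
  have := (Complex.one_div_one_sub_cpow_hasFPowerSeriesOnBall_zero a).hasSum hx'
  simp only [FormalMultilinearSeries.ofScalars_apply_eq,
    Ring.choose_add_sub_one_eq_ascPochhammer_eval_div, smul_eq_mul] at this
  exact this.summable

theorem summable_natCast_mul (hx : ‖x‖ < 1) :
    Summable fun n : ℕ => (n : ℂ) * hyper1F0Term a x n := by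
  refine (summable_nat_add_iff 1).mp ?_
  simpa only [Nat.cast_add, Nat.cast_one, succ_mul_succ_eq_param_add_one] using
    (summable (a + 1) hx).mul_left (a * x)

theorem hasSum_mul_sub_eq_zero {c : ℂ} (hx : ‖x‖ < 1) (hc : x * (a + c) = c) :
    HasSum (fun n : ℕ => hyper1F0Term a x n * (c - n)) 0 := by
  set G : ℕ → ℂ := fun n => n * hyper1F0Term a x n
  have hG : Summable G := summable_natCast_mul a hx
  have hx1 : 1 - x ≠ 0 := by
    intro h
    rw [sub_eq_zero] at h
    simp [← h] at hx
  have htel : ∀ n : ℕ, hyper1F0Term a x n * (c - n) = (1 - x)⁻¹ * (G (n + 1) - G n) := by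
    intro n
    simp only [G, Nat.cast_add, Nat.cast_one, succ_mul_succ]
    field_simp
    linear_combination -hyper1F0Term a x n * hc
  have hsum : HasSum (fun n => G (n + 1) - G n) (-G 0) := by
    have := ((summable_nat_add_iff 1).mpr hG).hasSum.sub hG.hasSum
    rwa [hG.tsum_eq_zero_add, sub_add_cancel_right] at this
  simpa [htel, G] using hsum.mul_left (1 - x)⁻¹

end hyper1F0Term

theorem three_term_identity_at_special_point_general (α : ℂ) (k : ℕ)
    (hαk : α + k ≠ 0) (hx : ‖(k : ℂ) / (α + k)‖ < 1) :
    ∑ n ∈ Finset.range k,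
      ((ascPochhammer ℂ n).eval α * (ascPochhammer ℂ n).eval (1 - (k : ℂ)) /
        ((ascPochhammer ℂ n).eval (-(k : ℂ)) * (n.factorial : ℂ))) * ((k : ℂ) / (α + k)) ^ n
    = ((ascPochhammer ℂ (k + 1)).eval α / ((k : ℂ) * ((k + 1).factorial : ℂ))) *
        ((k : ℂ) / (α + k)) ^ (k + 1) *
        ∑' n : ℕ, ((ascPochhammer ℂ n).eval (α + (k : ℂ) + 1) * (ascPochhammer ℂ n).eval 2 /
          ((ascPochhammer ℂ n).eval ((k : ℂ) + 2) * (n.factorial : ℂ))) *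
          ((k : ℂ) / (α + k)) ^ n := by
  set x := (k : ℂ) / (α + k)
  have hf := hyper1F0Term.hasSum_mul_sub_eq_zero α hx (c := k) (div_mul_cancel₀ _ hαk)
  have hsplit := hf.summable.sum_add_tsum_nat_add (k + 1)
  rw [hf.tsum_eq, Finset.sum_range_succ, sub_self, mul_zero, add_zero] at hsplit
  have hhead : ∀ n ∈ Finset.range k,
      (ascPochhammer ℂ n).eval α * (ascPochhammer ℂ n).eval (1 - (k : ℂ)) /
        ((ascPochhammer ℂ n).eval (-(k : ℂ)) * (n.factorial : ℂ)) * x ^ n =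
      (k : ℂ)⁻¹ * (hyper1F0Term α x n * (k - n)) := by
    intro n hn
    rw [mul_comm ((ascPochhammer ℂ n).eval α), mul_div_mul_comm,
      ascPochhammer_eval_one_sub_div_eval_neg (Finset.mem_range.mp hn), hyper1F0Term]
    ring
  rw [Finset.sum_congr rfl hhead, ← Finset.mul_sum, eq_neg_of_add_eq_zero_left hsplit,
    ← tsum_neg, ← tsum_mul_left, ← tsum_mul_left]
  congr 1 with m
  push_cast
  linear_combination (k : ℂ)⁻¹ * hyper1F0Term.add_succ_mul_succ α x k m

/-- The three-term identity at `x = k/(α+k)`: the terminating sum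
`∑_{n=0}^{k-1} (α)_n (1-k)_n / ((-k)_n n!) x^n` equals
`((α)_{k+1} / (k (k+1)!)) x^{k+1} ₂F₁(α+k+1, 2; k+2; x)`. -/
theorem three_term_identity_at_special_point (α : ℂ) (k : ℕ) (hk : 1 ≤ k)
    (hα : α ≠ 0) (hαk : α + k ≠ 0) (hx : ‖(k : ℂ) / (α + k)‖ < 1) :
    ∑ n ∈ Finset.range k,
      ((ascPochhammer ℂ n).eval α * (ascPochhammer ℂ n).eval (1 - (k : ℂ)) /
        ((ascPochhammer ℂ n).eval (-(k : ℂ)) * (n.factorial : ℂ))) * ((k : ℂ) / (α + k)) ^ n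
    = ((ascPochhammer ℂ (k + 1)).eval α / ((k : ℂ) * ((k + 1).factorial : ℂ))) *
        ((k : ℂ) / (α + k)) ^ (k + 1) *
        ∑' n : ℕ, ((ascPochhammer ℂ n).eval (α + (k : ℂ) + 1) * (ascPochhammer ℂ n).eval 2 /
          ((ascPochhammer ℂ n).eval ((k : ℂ) + 2) * (n.factorial : ℂ))) *
          ((k : ℂ) / (α + k)) ^ n :=
  three_term_identity_at_special_point_general α k hαk hx
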